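/- arXiv:2512.12932 — 2 statements merged into one kernel-verified Lean document; each statement's English description precedes it below -/
import Mathlib

section
/- Let d ≥ 1, let θ̃ ∈ EuclideanSpace ℝ (Fin d), and let R, ℓ : EuclideanSpace ℝ (Fin d) → ℝ be C² functions such that the gradient ∇R(θ̃) = 0 and the Hessian H = ∇²R(θ̃) (the derivative of the gradient map of R at θ̃) is an invertible linear map. Then there exist ε₀ > 0 and a map θ : ℝ → EuclideanSpace ℝ (Fin d), differentiable at 0, such that θ(0) = θ̃, for every ε with |ε| < ε₀ the stationarity condition ∇R(θ(ε)) + ε·∇ℓ(θ(ε)) = 0 holds, and the derivative of θ at 0 equals −H⁻¹(∇ℓ(θ̃)). -/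
/-! The stationary points of `R + ε • ℓ` are the zeros of `F (ε, θ) = ∇R θ + ε • ∇ℓ θ`, whose
partial derivative in `θ` at `(0, θ̃)` is the Hessian `H`. The implicit function theorem gives a
differentiable branch `θ(ε)` of zeros through `θ̃`, and differentiating `F (ε, θ ε) = 0` at `ε = 0`
gives `H θ'(0) + ∇ℓ θ̃ = 0`. -/

theorem ContinuousLinearMap.isInvertible_of_isUnit {R M : Type*} [Semiring R]
    [TopologicalSpace M] [AddCommMonoid M] [Module R M] {f : M →L[R] M} (hf : IsUnit f) :
    f.IsInvertible := by
  obtain ⟨u, rfl⟩ := hf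
  exact ⟨ContinuousLinearEquiv.unitsEquiv R M u, rfl⟩

theorem ContDiff.gradient {E : Type*} [NormedAddCommGroup E] [InnerProductSpace ℝ E]
    [CompleteSpace E] {f : E → ℝ} {n : WithTop ℕ∞} (hf : ContDiff ℝ (n + 1) f) :
    ContDiff ℝ n (gradient f) :=
  (InnerProductSpace.toDual ℝ E).symm.contDiff.comp (hf.fderiv_right le_rfl)

section ImplicitCurve

variable {𝕜 : Type*} [RCLike 𝕜]
  {E : Type*} [NormedAddCommGroup E] [NormedSpace 𝕜 E] [CompleteSpace E]
  {F : Type*} [NormedAddCommGroup F] [NormedSpace 𝕜 F] [CompleteSpace F]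

theorem ContDiffAt.exists_implicit_curve {f : 𝕜 × E → F} {x₀ : E}
    (hf : ContDiffAt 𝕜 1 f (0, x₀)) (hf₀ : f (0, x₀) = 0)
    (hinv : (fderiv 𝕜 f (0, x₀) ∘L .inr 𝕜 𝕜 E).IsInvertible) :
    ∃ (ε₀ : ℝ) (θ : 𝕜 → E), 0 < ε₀ ∧ DifferentiableAt 𝕜 θ 0 ∧ θ 0 = x₀ ∧
      (∀ ε : 𝕜, ‖ε‖ < ε₀ → f (ε, θ ε) = 0) ∧
      deriv θ 0 = -(fderiv 𝕜 f (0, x₀) ∘L .inr 𝕜 𝕜 E).inverse (fderiv 𝕜 f (0, x₀) (1, 0)) := by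
  set θ := hf.implicitFunction one_ne_zero hinv
  have hθ := (hf.hasStrictFDerivAt_implicitFunction one_ne_zero hinv).hasFDerivAt
  obtain ⟨ε₀, hε₀, hsolves⟩ :=
    Metric.eventually_nhds_iff.mp (hf.eventually_apply_implicitFunction one_ne_zero hinv)
  refine ⟨ε₀, θ, hε₀, hθ.differentiableAt, hf.implicitFunction_apply_self one_ne_zero hinv,
    fun ε hε ↦ ?_, ?_⟩
  · rw [← hf₀]
    exact hsolves (by simpa using hε)
  · rw [hθ.hasDerivAt.deriv]
    simp

end ImplicitCurve

section PerturbedGradient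

variable {E : Type*} [NormedAddCommGroup E] [InnerProductSpace ℝ E] [CompleteSpace E]

noncomputable def perturbedGradient (R ℓ : E → ℝ) (p : ℝ × E) : E :=
  gradient R p.2 + p.1 • gradient ℓ p.2

variable {R ℓ : E → ℝ}

theorem contDiff_perturbedGradient (hR : ContDiff ℝ 2 R) (hℓ : ContDiff ℝ 2 ℓ) :
    ContDiff ℝ 1 (perturbedGradient R ℓ) :=
  (hR.gradient.comp contDiff_snd).add (contDiff_fst.smul (hℓ.gradient.comp contDiff_snd))

theorem hasFDerivAt_perturbedGradient_zero (hR : ContDiff ℝ 2 R) (hℓ : ContDiff ℝ 2 ℓ) (x : E) :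
    HasFDerivAt (perturbedGradient R ℓ)
      ((ContinuousLinearMap.toSpanSingleton ℝ (gradient ℓ x)).coprod
        (fderiv ℝ (gradient R) x)) (0, x) := by
  have hsnd : HasFDerivAt (Prod.snd : ℝ × E → E) (.snd ℝ ℝ E) (0, x) := hasFDerivAt_snd
  have hgradR := (hR.gradient.differentiable one_ne_zero x).hasFDerivAt.comp _ hsnd
  have hgradℓ := (hℓ.gradient.differentiable one_ne_zero x).hasFDerivAt.comp _ hsnd
  refine (hgradR.add (hasFDerivAt_fst.smul hgradℓ)).congr_fderiv ?_
  ext <;> simp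

end PerturbedGradient

theorem newton_step_parameter_change_general
    (d : ℕ)
    (θt : EuclideanSpace ℝ (Fin d))
    (R ℓ : EuclideanSpace ℝ (Fin d) → ℝ)
    (hR : ContDiff ℝ 2 R) (hℓ : ContDiff ℝ 2 ℓ)
    (hgrad : gradient R θt = 0)
    (hH : IsUnit (fderiv ℝ (gradient R) θt)) :
    ∃ (ε₀ : ℝ) (θ : ℝ → EuclideanSpace ℝ (Fin d)),
      0 < ε₀ ∧
      DifferentiableAt ℝ θ 0 ∧
      θ 0 = θt ∧
      (∀ ε : ℝ, |ε| < ε₀ →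
        gradient R (θ ε) + ε • gradient ℓ (θ ε) = 0) ∧
      deriv θ 0 = -(Ring.inverse (fderiv ℝ (gradient R) θt) (gradient ℓ θt)) := by
  have hderiv := (hasFDerivAt_perturbedGradient_zero hR hℓ θt).fderiv
  have hinv : (fderiv ℝ (perturbedGradient R ℓ) (0, θt) ∘L .inr ℝ ℝ _).IsInvertible := by
    simpa [hderiv] using ContinuousLinearMap.isInvertible_of_isUnit hH
  obtain ⟨ε₀, θ, hε₀, hθ, hθ₀, hstationary, hθ'⟩ :=
    (contDiff_perturbedGradient hR hℓ).contDiffAt.exists_implicit_curve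
      (by simp [perturbedGradient, hgrad]) hinv
  refine ⟨ε₀, θ, hε₀, hθ, hθ₀, hstationary, ?_⟩
  simpa [hderiv, ContinuousLinearMap.ringInverse_eq_inverse] using hθ'

/-- **Newton-step parameter change for the perturbed minimizer.**
If `∇R(θ̃) = 0` and the Hessian `H = ∇²R(θ̃)` (the derivative of the gradient
map of `R` at `θ̃`) is invertible, then there is a differentiable branch
`θ(ε)` of stationary points of `R + ε • ℓ` through `θ̃` whose derivative at
`ε = 0` is `-H⁻¹ (∇ℓ(θ̃))`. -/
theorem newton_step_parameter_change
    (d : ℕ) (hd : 1 ≤ d)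
    (θt : EuclideanSpace ℝ (Fin d))
    (R ℓ : EuclideanSpace ℝ (Fin d) → ℝ)
    (hR : ContDiff ℝ 2 R) (hℓ : ContDiff ℝ 2 ℓ)
    (hgrad : gradient R θt = 0)
    (hH : IsUnit (fderiv ℝ (gradient R) θt)) :
    ∃ (ε₀ : ℝ) (θ : ℝ → EuclideanSpace ℝ (Fin d)),
      0 < ε₀ ∧
      DifferentiableAt ℝ θ 0 ∧
      θ 0 = θt ∧
      (∀ ε : ℝ, |ε| < ε₀ →
        gradient R (θ ε) + ε • gradient ℓ (θ ε) = 0) ∧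
      deriv θ 0 = -(Ring.inverse (fderiv ℝ (gradient R) θt) (gradient ℓ θt)) :=
  newton_step_parameter_change_general d θt R ℓ hR hℓ hgrad hH
end

section
/- Let d ≥ 1, let θ̃ ∈ EuclideanSpace ℝ (Fin d), let R : EuclideanSpace ℝ (Fin d) → ℝ be C² with ∇R(θ̃) = 0 and Hessian H = ∇²R(θ̃) positive definite, and let g ∈ EuclideanSpace ℝ (Fin d). Let θ : ℝ → EuclideanSpace ℝ (Fin d) be differentiable at 0 with θ(0) = θ̃ and θ'(0) = −H⁻¹ g. Then the limit as ε → 0 of (R(θ(ε)) − R(θ̃)) / ε² exists and equals ½ ⟨g, H⁻¹ g⟩. In particular, the second-order coefficient of the subset risk change along the perturbed-minimizer path is half the subset-based self-influence I := ⟨g, H⁻¹ g⟩. -/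
/-!
At a critical point, Peano's form of Taylor's theorem gives
`R x - R θ̃ = ½ D²R θ̃ (x - θ̃) (x - θ̃) + o(‖x - θ̃‖²)`; the remainder estimate follows from the
mean value inequality, since the derivative of the remainder is `o(‖x - θ̃‖)`. Along the curve,
`θ ε - θ̃ = ε v + o(ε)` with `v = -H⁻¹ g`, so `(R (θ ε) - R θ̃) / ε² → ½ D²R θ̃ v v = ½ ⟪H v, v⟫`,
which is `½ ⟪g, H⁻¹ g⟫`.
-/

open scoped RealInnerProductSpace Topology

open Asymptotics Filter

section Taylor

variable {E F : Type*} [NormedAddCommGroup E] [NormedSpace ℝ E]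
  [NormedAddCommGroup F] [NormedSpace ℝ F]

theorem isLittleO_sub_sq_of_fderiv_isLittleO {G : E → F} {G' : E → E →L[ℝ] F} {a : E}
    (hG : ∀ᶠ x in 𝓝 a, HasFDerivAt G (G' x) x) (hG' : G' =o[𝓝 a] fun x => x - a) :
    (fun x => G x - G a) =o[𝓝 a] fun x => ‖x - a‖ ^ 2 := by
  refine isLittleO_iff.2 fun c hc => ?_
  obtain ⟨δ, hδ, hball⟩ := Metric.eventually_nhds_iff_ball.1 (hG.and (isLittleO_iff.1 hG' hc))
  filter_upwards [Metric.ball_mem_nhds a hδ] with x hx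
  have hsub : Metric.closedBall a ‖x - a‖ ⊆ Metric.ball a δ :=
    Metric.closedBall_subset_ball (by simpa [dist_eq_norm] using hx)
  have hbound : ∀ y ∈ Metric.closedBall a ‖x - a‖, ‖G' y‖ ≤ c * ‖x - a‖ := fun y hy =>
    (hball y (hsub hy)).2.trans (by gcongr; simpa [dist_eq_norm] using hy)
  have hmv := (convex_closedBall a ‖x - a‖).norm_image_sub_le_of_norm_hasFDerivWithin_le
    (fun y hy => (hball y (hsub hy)).1.hasFDerivWithinAt) hbound
    (Metric.mem_closedBall_self (norm_nonneg _)) (Metric.mem_closedBall.2 (dist_eq_norm x a).le)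
  calc ‖G x - G a‖ ≤ c * ‖x - a‖ * ‖x - a‖ := hmv
    _ = c * ‖‖x - a‖ ^ 2‖ := by rw [norm_pow, norm_norm]; ring

theorem ContinuousLinearMap.hasFDerivAt_half_apply_sub_sub {B : E →L[ℝ] E →L[ℝ] F}
    (hB : ∀ v w, B v w = B w v) (a x : E) :
    HasFDerivAt (fun y => (1 / 2 : ℝ) • B (y - a) (y - a)) (B (x - a)) x := by
  have hsub : HasFDerivAt (fun y : E => y - a) (ContinuousLinearMap.id ℝ E) x :=
    (hasFDerivAt_id x).sub_const a
  refine (((B.hasFDerivAt.comp x hsub).clm_apply hsub).const_smul (1 / 2 : ℝ)).congr_fderiv ?_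
  ext w
  simp only [smul_apply, add_apply, Function.comp_apply,
    ContinuousLinearMap.comp_apply, ContinuousLinearMap.flip_apply, ContinuousLinearMap.id_apply]
  rw [hB w, ← two_smul ℝ, smul_smul]
  norm_num

theorem isLittleO_taylor_two {f : E → F} {f' : E → E →L[ℝ] F} {f'' : E →L[ℝ] E →L[ℝ] F} {a : E}
    (hf : ∀ᶠ x in 𝓝 a, HasFDerivAt f (f' x) x) (hf' : HasFDerivAt f' f'' a) :
    (fun x => f x - f a - f' a (x - a) - (1 / 2 : ℝ) • f'' (x - a) (x - a)) =o[𝓝 a]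
      fun x => ‖x - a‖ ^ 2 := by
  have hsymm : ∀ v w, f'' v w = f'' w v := second_derivative_symmetric_of_eventually hf hf'
  have hG : ∀ᶠ x in 𝓝 a,
      HasFDerivAt (fun y => f y - f' a (y - a) - (1 / 2 : ℝ) • f'' (y - a) (y - a))
        (f' x - f' a - f'' (x - a)) x := by
    filter_upwards [hf] with x hx
    exact (hx.sub (((f' a).hasFDerivAt).comp x ((hasFDerivAt_id x).sub_const a))).sub
      (f''.hasFDerivAt_half_apply_sub_sub hsymm a x)
  convert isLittleO_sub_sq_of_fderiv_isLittleO hG hf'.isLittleO using 2 with x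
  simp only [sub_self, map_zero, smul_zero, sub_zero]
  abel

end Taylor

section Curve

variable {E : Type*} [NormedAddCommGroup E] [NormedSpace ℝ E]

theorem Asymptotics.IsLittleO.tendsto_comp_div_sq {r : E → ℝ} {a : E} {θ : ℝ → E}
    (hr : r =o[𝓝 a] fun x => ‖x - a‖ ^ 2) (hθ : DifferentiableAt ℝ θ 0) (hθ0 : θ 0 = a) :
    Tendsto (fun ε => r (θ ε) / ε ^ 2) (𝓝 0) (𝓝 0) := by
  have hθa : Tendsto θ (𝓝 0) (𝓝 a) := hθ0 ▸ hθ.continuousAt.tendsto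
  have hθO : (fun ε => ‖θ ε - a‖ ^ 2) =O[𝓝 0] fun ε : ℝ => ε ^ 2 := by
    simpa [hθ0] using (hθ.isBigO_sub.norm_norm.pow 2)
  exact ((hr.comp_tendsto hθa).trans_isBigO hθO).tendsto_div_nhds_zero

theorem ContinuousLinearMap.tendsto_apply_sub_apply_sub_div_sq (B : E →L[ℝ] E →L[ℝ] ℝ)
    {θ : ℝ → E} {v : E} (hθ : HasDerivAt θ v 0) :
    Tendsto (fun ε => B (θ ε - θ 0) (θ ε - θ 0) / ε ^ 2) (𝓝[≠] 0) (𝓝 (B v v)) := by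
  have hslope := hasDerivAt_iff_tendsto_slope.1 hθ
  refine ((B.continuous₂.tendsto (v, v)).comp (hslope.prodMk_nhds hslope)).congr' ?_
  filter_upwards [self_mem_nhdsWithin] with ε (hε : ε ≠ 0)
  simp only [Function.comp_apply, Function.uncurry_apply_pair, slope_def_module, sub_zero,
    map_smul, smul_apply, smul_eq_mul]
  field_simp

theorem tendsto_sub_div_sq_of_isCriticalPoint {f : E → ℝ} {f' : E → E →L[ℝ] ℝ}
    {f'' : E →L[ℝ] E →L[ℝ] ℝ} {a v : E} {θ : ℝ → E}
    (hf : ∀ᶠ x in 𝓝 a, HasFDerivAt f (f' x) x) (hf' : HasFDerivAt f' f'' a) (hcrit : f' a = 0)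
    (hθ : HasDerivAt θ v 0) (hθ0 : θ 0 = a) :
    Tendsto (fun ε => (f (θ ε) - f a) / ε ^ 2) (𝓝[≠] 0) (𝓝 ((1 / 2) * f'' v v)) := by
  have hrem := ((isLittleO_taylor_two hf hf').tendsto_comp_div_sq hθ.differentiableAt
    hθ0).mono_left (nhdsWithin_le_nhds (s := {0}ᶜ))
  have hquad := (f''.tendsto_apply_sub_apply_sub_div_sq hθ).const_mul (1 / 2)
  convert hrem.add hquad using 2
  · rw [hcrit, hθ0, zero_apply, smul_eq_mul]
    ring
  · rw [zero_add]

end Curve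

theorem inner_fderiv_gradient_apply {E : Type*} [NormedAddCommGroup E] [InnerProductSpace ℝ E]
    [CompleteSpace E] (f : E → ℝ) (x v w : E) :
    ⟪fderiv ℝ (gradient f) x v, w⟫ = fderiv ℝ (fderiv ℝ f) x v w := by
  have : gradient f = (InnerProductSpace.toDual ℝ E).symm ∘ fderiv ℝ f := rfl
  rw [this, LinearIsometryEquiv.comp_fderiv]
  exact InnerProductSpace.toDual_symm_apply

theorem ContinuousLinearMap.isUnit_of_inner_apply_self_pos {E : Type*} [NormedAddCommGroup E]
    [InnerProductSpace ℝ E] [FiniteDimensional ℝ E] (T : E →L[ℝ] E)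
    (hT : ∀ v, v ≠ 0 → 0 < ⟪v, T v⟫) : IsUnit T := by
  rw [ContinuousLinearMap.isUnit_iff_isUnit_toLinearMap, LinearMap.isUnit_iff_ker_eq_bot,
    LinearMap.ker_eq_bot']
  intro v hv
  by_contra hne
  have hpos := hT v hne
  rw [show T v = 0 from hv, inner_zero_right] at hpos
  exact hpos.false

theorem risk_change_second_order_is_half_self_influence_general
    (d : ℕ)
    (θt : EuclideanSpace ℝ (Fin d))
    (R : EuclideanSpace ℝ (Fin d) → ℝ)
    (hR : ContDiff ℝ 2 R)
    (hgrad : gradient R θt = 0)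
    (hposdef : ∀ v : EuclideanSpace ℝ (Fin d), v ≠ 0 →
      0 < ⟪v, (fderiv ℝ (gradient R) θt) v⟫)
    (g : EuclideanSpace ℝ (Fin d))
    (θ : ℝ → EuclideanSpace ℝ (Fin d))
    (hθdiff : DifferentiableAt ℝ θ 0)
    (hθ0 : θ 0 = θt)
    (hθ' : deriv θ 0 = -(Ring.inverse (fderiv ℝ (gradient R) θt) g)) :
    Filter.Tendsto (fun ε : ℝ => (R (θ ε) - R θt) / ε ^ 2)
      (𝓝[≠] 0)
      (𝓝 ((1 / 2) * ⟪g, Ring.inverse (fderiv ℝ (gradient R) θt) g⟫)) := by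
  set H := fderiv ℝ (gradient R) θt
  have hR₁ : ∀ x, HasFDerivAt R (fderiv ℝ R x) x :=
    fun x => (hR.differentiable two_ne_zero x).hasFDerivAt
  have hR₂ : HasFDerivAt (fderiv ℝ R) (fderiv ℝ (fderiv ℝ R) θt) θt :=
    ((hR.fderiv_right one_add_one_eq_two.le).differentiable one_ne_zero θt).hasFDerivAt
  have hcrit : fderiv ℝ R θt = 0 := by simpa [gradient] using hgrad
  have hH : IsUnit H := H.isUnit_of_inner_apply_self_pos hposdef
  have hHinv : H (Ring.inverse H g) = g :=
    ContinuousLinearMap.ext_iff.1 (Ring.mul_inverse_cancel H hH) g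
  convert tendsto_sub_div_sq_of_isCriticalPoint (.of_forall hR₁) hR₂ hcrit
    (hθ' ▸ hθdiff.hasDerivAt) hθ0 using 3
  rw [← inner_fderiv_gradient_apply, map_neg, hHinv, inner_neg_neg, real_inner_comm]

/-- **Self-influence as the leading coefficient of the risk change.**
If `∇R(θ̃) = 0`, the Hessian `H = ∇²R(θ̃)` is positive definite, and `θ(ε)`
is differentiable at `0` with `θ(0) = θ̃` and `θ'(0) = -H⁻¹ g`, then
`(R(θ(ε)) - R(θ̃)) / ε² → ½ ⟪g, H⁻¹ g⟫` as `ε → 0`; i.e. the second-order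
coefficient of the risk change is half the self-influence `⟪g, H⁻¹ g⟫`. -/
theorem risk_change_second_order_is_half_self_influence
    (d : ℕ) (hd : 1 ≤ d)
    (θt : EuclideanSpace ℝ (Fin d))
    (R : EuclideanSpace ℝ (Fin d) → ℝ)
    (hR : ContDiff ℝ 2 R)
    (hgrad : gradient R θt = 0)
    (hposdef : ∀ v : EuclideanSpace ℝ (Fin d), v ≠ 0 →
      0 < ⟪v, (fderiv ℝ (gradient R) θt) v⟫)
    (g : EuclideanSpace ℝ (Fin d))
    (θ : ℝ → EuclideanSpace ℝ (Fin d))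
    (hθdiff : DifferentiableAt ℝ θ 0)
    (hθ0 : θ 0 = θt)
    (hθ' : deriv θ 0 = -(Ring.inverse (fderiv ℝ (gradient R) θt) g)) :
    Filter.Tendsto (fun ε : ℝ => (R (θ ε) - R θt) / ε ^ 2)
      (𝓝[≠] 0)
      (𝓝 ((1 / 2) * ⟪g, Ring.inverse (fderiv ℝ (gradient R) θt) g⟫)) :=
  risk_change_second_order_is_half_self_influence_general d θt R hR hgrad hposdef g θ hθdiff hθ0 hθ'
end
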